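/- Free groups of finite rank are Hopfian: every surjective endomorphism of a finitely generated free group is an automorphism. -/

import Mathlib

/-!
A surjective endomorphism `f` of a finitely generated group `G` induces an injection
`ψ ↦ ψ ∘ f` of the finite set `Hom(G, Q)` into itself for every finite group `Q`, hence a
bijection; so every map `G → Q` factors through `f` and kills `ker f`. If `G` is residually
finite, this forces `ker f = 1`.

Free groups are residually finite: for a reduced word `w = x₀ ⋯ x_{ℓ-1}`, let each letter
`xᵢ` move the point `i + 1` of `{0, …, ℓ}` to `i`. Reducedness makes these prescriptions, grouped
by generator, partial injections; extending them to permutations gives a homomorphism to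
`Perm (Fin (ℓ + 1))` in which `w` sends `ℓ` to `0`.
-/

open Function

namespace Group

instance finite_monoidHom_of_fg {G Q : Type*} [Group G] [Group.FG G] [Group Q] [Finite Q] :
    Finite (G →* Q) := by
  obtain ⟨α, _, φ, hφ⟩ := Group.fg_iff_exists_freeGroup_hom_surjective_finite.mp ‹_›
  have : Finite (FreeGroup α →* Q) := .of_equiv _ FreeGroup.lift
  exact .of_injective (fun ψ ↦ ψ.comp φ) fun _ _ ↦ (MonoidHom.cancel_right hφ).mp

theorem ResiduallyFinite.injective_of_surjective {G : Type*} [Group G] [Group.FG G]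
    [ResiduallyFinite G] {f : G →* G} (hf : Surjective f) : Injective f := by
  refine (injective_iff_map_eq_one f).mpr fun g hg ↦ ?_
  refine eq_one_iff_forall_finiteIndexNormalSubroup g fun H ↦ ?_
  have hcomp : Surjective fun ψ : G →* G ⧸ H.toSubgroup ↦ ψ.comp f :=
    Finite.injective_iff_surjective.mp fun _ _ ↦ (MonoidHom.cancel_right hf).mp
  obtain ⟨ψ, hψ⟩ := hcomp (QuotientGroup.mk' H.toSubgroup)
  refine (QuotientGroup.eq_one_iff (N := H.toSubgroup) g).mp ?_
  rw [← QuotientGroup.mk'_apply, ← hψ, MonoidHom.comp_apply, hg, map_one]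

end Group

namespace List

theorem prod_map_perm_apply_last {β X : Type*} (ρ : β → Equiv.Perm X) :
    ∀ (L : List β) (x : Fin (L.length + 1) → X),
      (∀ i : Fin L.length, ρ L[i] (x i.succ) = x i.castSucc) →
        (L.map ρ).prod (x (Fin.last _)) = x 0
  | [], _, _ => rfl
  | b :: L, x, hx => by
    have ih := prod_map_perm_apply_last ρ L (x ∘ Fin.succ) fun i ↦ hx i.succ
    rw [map_cons, prod_cons, Equiv.Perm.mul_apply]
    exact (congrArg (ρ b) ih).trans (hx 0)

end List

namespace FreeGroup

variable {α : Type*} {L : List (α × Bool)}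

/- The letter `(a, b)` at position `i` of `L` asks `σ a` to send `letterEndpoint L true i` to
`letterEndpoint L false i`, i.e. `i + 1 ↦ i` if `b` and `i ↦ i + 1` otherwise. -/
def letterEndpoint (L : List (α × Bool)) (s : Bool) (i : Fin L.length) : Fin (L.length + 1) :=
  if L[i].2 = s then i.succ else i.castSucc

theorem IsReduced.snd_eq_of_succ_eq (h : IsReduced L) {i j : Fin L.length}
    (hij : (j : ℕ) = i + 1) (hfst : L[i].1 = L[j].1) : L[i].2 = L[j].2 := by
  have := List.IsChain.getElem h i (hij ▸ j.2)
  simp only [Fin.getElem_fin, hij] at hfst ⊢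
  exact this hfst

theorem IsReduced.injOn_letterEndpoint (h : IsReduced L) (s : Bool) (a : α) :
    Set.InjOn (letterEndpoint L s) {i | L[i].1 = a} := by
  intro i (hi : L[i].1 = a) j (hj : L[j].1 = a) hij
  have hsame : L[i].1 = L[j].1 := hi.trans hj.symm
  by_cases hsi : L[i].2 = s <;> by_cases hsj : L[j].2 = s <;>
    simp only [letterEndpoint, hsi, hsj, if_true, if_false, Fin.ext_iff, Fin.val_succ,
      Fin.val_castSucc] at hij
  · omega
  · exact (hsj ((h.snd_eq_of_succ_eq hij.symm hsame).symm.trans hsi)).elim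
  · exact (hsi ((h.snd_eq_of_succ_eq hij hsame.symm).symm.trans hsj)).elim
  · omega

theorem IsReduced.exists_perm_letterEndpoint (h : IsReduced L) :
    ∃ σ : α → Equiv.Perm (Fin (L.length + 1)),
      ∀ i : Fin L.length, σ L[i].1 (letterEndpoint L true i) = letterEndpoint L false i := by
  have key (a : α) : ∃ σ : Equiv.Perm (Fin (L.length + 1)),
      ∀ i : {i : Fin L.length // L[i].1 = a},
        σ (letterEndpoint L true i) = letterEndpoint L false i :=
    Equiv.Perm.exists_extending_pair _ _ (h.injOn_letterEndpoint true a).injective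
      (h.injOn_letterEndpoint false a).injective
  choose σ hσ using key
  exact ⟨σ, fun i ↦ hσ _ ⟨i, rfl⟩⟩

theorem IsReduced.exists_lift_mk_apply_last (h : IsReduced L) :
    ∃ σ : α → Equiv.Perm (Fin (L.length + 1)), lift σ (mk L) (Fin.last _) = 0 := by
  obtain ⟨σ, hσ⟩ := h.exists_perm_letterEndpoint
  refine ⟨σ, List.prod_map_perm_apply_last _ L id fun i ↦ ?_⟩
  cases hb : L[(i : ℕ)].2
  · rw [id, cond_false, Equiv.Perm.inv_eq_iff_eq]
    simpa [letterEndpoint, Fin.getElem_fin, hb] using (hσ i).symm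
  · simpa [letterEndpoint, Fin.getElem_fin, hb] using hσ i

theorem exists_monoidHom_perm_ne_one {w : FreeGroup α} (hw : w ≠ 1) :
    ∃ (k : ℕ) (φ : FreeGroup α →* Equiv.Perm (Fin (k + 1))), φ w ≠ 1 := by
  classical
  obtain ⟨σ, hσ⟩ := (isReduced_toWord (x := w)).exists_lift_mk_apply_last
  refine ⟨_, lift σ, fun hone ↦ hw ?_⟩
  rw [mk_toWord, hone] at hσ
  rw [← toWord_eq_nil_iff, ← List.length_eq_zero_iff]
  simpa [Fin.ext_iff] using hσ

instance : Group.ResiduallyFinite (FreeGroup α) :=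
  Group.residuallyFinite_of_forall_exists_finite_monoidHom fun _ hw ↦
    let ⟨_, φ, hφ⟩ := exists_monoidHom_perm_ne_one hw
    ⟨_, _, inferInstance, φ, hφ⟩

end FreeGroup

/-- Free groups of finite rank are Hopfian: every surjective endomorphism of a finitely
generated free group is an automorphism (i.e. bijective). -/
theorem freeGroup_hopfian (n : ℕ) (f : FreeGroup (Fin n) →* FreeGroup (Fin n))
    (hf : Function.Surjective f) : Function.Bijective f :=
  ⟨Group.ResiduallyFinite.injective_of_surjective hf, hf⟩
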